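/- Let n ≥ 3 be an integer. Then for every integer ℓ ≥ 1 the following identity holds in F: Σ_{a ∈ I_n} q^{2n}·(1 + (1 − q^{−2})/(q²·L_a² − 1))·((q^{−2n}·L_a − 1)/(q − q^{−1}))^ℓ·∏_{b ∈ I_n, b ≠ a} (q·L_a − q^{−1}·L_b)/(q·L_a − q·L_b) = Σ_{a ∈ I_n} ((q²·L_a − q^{−2}·L_a^{−1})/(L_a − L_a^{−1}))·((q^{−2n}·L_a − 1)/(q − q^{−1}))^ℓ·P_{n,a}. (This is the type C_n case of the paper's Lemma rewriting the Harish–Chandra image of the order-ℓ quantum Casimir element.) -/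
import Mathlib


/-!
`K = ℚ(q)` is modelled as `RatFunc ℚ` with `q = RatFunc.X`, and
`F = K(L_1, …, L_n)` is modelled inside the fraction field of the polynomial ring
`K[L_0, L_1, L_2, …]` (only the independent indeterminates `L_1, …, L_n` are used).
For `a ∈ I_n = {-n, …, -1, 1, …, n}` we set `L_{-a} := L_a⁻¹`.
-/

noncomputable section

abbrev KK : Type := RatFunc ℚ
abbrev RR : Type := MvPolynomial ℕ KK
abbrev FF : Type := FractionRing RR

/-- the indeterminate `q`, viewed in `F` -/
def qF : FF := algebraMap RR FF (MvPolynomial.C RatFunc.X)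

/-- `L_a` for `a ∈ ℤ`: `L_a` an indeterminate for `a > 0`, and `L_a = L_{-a}⁻¹` for `a < 0`. -/
def LF (a : ℤ) : FF :=
  if a = 0 then 1
  else if 0 < a then algebraMap RR FF (MvPolynomial.X a.toNat)
  else (algebraMap RR FF (MvPolynomial.X (-a).toNat))⁻¹

/-- the index set `I_n = {-n, …, -1, 1, …, n}` -/
def In (n : ℕ) : Finset ℤ := (Finset.Icc (-(n : ℤ)) (n : ℤ)).erase 0

/-- `P_{n,a} = ∏_{b ∈ I_n, b ≠ ±a} (q L_a - q⁻¹ L_b)/(L_a - L_b)` -/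
def Pna (n : ℕ) (a : ℤ) : FF :=
  ∏ b ∈ ((In n).erase a).erase (-a), (qF * LF a - qF⁻¹ * LF b) / (LF a - LF b)

open MvPolynomial Finset

lemma map_ne' {p : RR} (hp : p ≠ 0) : algebraMap RR FF p ≠ 0 :=
  (map_ne_zero_iff _ (IsFractionRing.injective RR FF)).2 hp

lemma qF_ne : qF ≠ 0 := map_ne' (by
  intro h
  have := congrArg MvPolynomial.constantCoeff h
  simp [RatFunc.X_ne_zero] at this)

lemma LF_pos (a : ℤ) (h : 0 < a) : LF a = algebraMap RR FF (MvPolynomial.X a.toNat) := by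
  simp [LF, h, h.ne']

lemma LF_negg (a : ℤ) (h : 0 < a) : LF (-a) = (LF a)⁻¹ := by
  rw [LF_pos a h]
  simp [LF, h, h.ne', not_lt.2 h.le, (by omega : ¬ (0:ℤ) < -a), (by omega : (-a : ℤ) ≠ 0)]

lemma LF_ne (a : ℤ) (h : a ≠ 0) : LF a ≠ 0 := by
  rcases lt_or_gt_of_ne h with h'|h'
  · have : LF a = (LF (-a))⁻¹ := by rw [← LF_negg (-a) (by omega), neg_neg]
    rw [this, LF_pos (-a) (by omega)]
    exact inv_ne_zero (map_ne' (MvPolynomial.X_ne_zero _))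
  · rw [LF_pos a h']; exact map_ne' (MvPolynomial.X_ne_zero _)

lemma LF_sq_ne (a : ℤ) (h : a ≠ 0) : (LF a)^2 ≠ 1 := by
  have key : ∀ b : ℤ, 0 < b → (LF b)^2 ≠ 1 := by
    intro b hb
    rw [LF_pos b hb]
    intro hcontra
    have : algebraMap RR FF ((MvPolynomial.X b.toNat)^2 - 1) = 0 := by
      rw [(algebraMap RR FF).map_sub, (algebraMap RR FF).map_pow, (algebraMap RR FF).map_one]
      rw [hcontra]; ring
    have h2 := (map_eq_zero_iff _ (IsFractionRing.injective RR FF)).1 this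
    have := congrArg MvPolynomial.constantCoeff h2
    simp at this
  rcases lt_or_gt_of_ne h with h'|h'
  · have hx : LF a = (LF (-a))⁻¹ := by rw [← LF_negg (-a) (by omega), neg_neg]
    rw [hx, inv_pow]
    intro hcontra
    apply key (-a) (by omega)
    have hne : LF (-a) ≠ 0 := LF_ne (-a) (by omega)
    field_simp at hcontra
    rw [hcontra]
  · exact key a h'

lemma qsq_LF_sq_ne (a : ℤ) (h : a ≠ 0) : qF^2 * (LF a)^2 ≠ 1 := by
  rcases lt_or_gt_of_ne h with h'|h'
  · have hx : LF a = (LF (-a))⁻¹ := by rw [← LF_negg (-a) (by omega), neg_neg]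
    rw [hx, inv_pow, LF_pos (-a) (by omega)]
    set y := algebraMap RR FF (MvPolynomial.X (-a).toNat) with hy
    have hyne : y ≠ 0 := map_ne' (MvPolynomial.X_ne_zero _)
    intro hcontra
    have h1 : qF^2 = y^2 := by field_simp at hcontra; exact hcontra
    have : algebraMap RR FF ((MvPolynomial.C RatFunc.X)^2 - (MvPolynomial.X (-a).toNat)^2) = 0 := by
      rw [(algebraMap RR FF).map_sub, (algebraMap RR FF).map_pow, (algebraMap RR FF).map_pow]
      rw [show (algebraMap RR FF (MvPolynomial.C RatFunc.X)) = qF from rfl, h1, hy]; ring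
    have h2 := (map_eq_zero_iff _ (IsFractionRing.injective RR FF)).1 this
    have := congrArg (MvPolynomial.coeff (Finsupp.single (-a).toNat 2)) h2
    rw [← map_pow] at this
    rw [MvPolynomial.coeff_sub, MvPolynomial.coeff_zero, MvPolynomial.coeff_C, if_neg (by simp [eq_comm, Finsupp.single_eq_zero]), MvPolynomial.coeff_X_pow, if_pos rfl] at this
    simp at this
  · rw [LF_pos a h']
    intro hcontra
    have : algebraMap RR FF ((MvPolynomial.C RatFunc.X)^2 * (MvPolynomial.X a.toNat)^2 - 1) = 0 := by
      rw [(algebraMap RR FF).map_sub, (algebraMap RR FF).map_mul, (algebraMap RR FF).map_pow, (algebraMap RR FF).map_pow, (algebraMap RR FF).map_one]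
      rw [show (algebraMap RR FF (MvPolynomial.C RatFunc.X)) = qF from rfl, hcontra]; ring
    have h2 := (map_eq_zero_iff _ (IsFractionRing.injective RR FF)).1 this
    have := congrArg MvPolynomial.constantCoeff h2
    simp at this

lemma mem_In {n : ℕ} {a : ℤ} : a ∈ In n ↔ a ≠ 0 ∧ -(n:ℤ) ≤ a ∧ a ≤ n := by
  simp [In, Finset.mem_erase, Finset.mem_Icc, and_assoc]

lemma neg_mem_In {n : ℕ} {a : ℤ} (h : a ∈ In n) : -a ∈ In n := by
  rw [mem_In] at *; omega

lemma card_In (n : ℕ) : (In n).card = 2*n := by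
  rw [In, Finset.card_erase_of_mem (by simp [Finset.mem_Icc]), Int.card_Icc]
  omega

lemma key_general {F : Type*} [Field F] (q x Q : F)
    (hq : q ≠ 0) (hx : x ≠ 0) (hQ : Q ≠ 0) (hd1 : q^2*x^2 - 1 ≠ 0) (hd2 : x - x⁻¹ ≠ 0) :
    (Q * q) * (1 + (1 - (q^2)⁻¹)/(q^2*x^2-1)) * (Q⁻¹ * ((q*x - q⁻¹*x⁻¹)/(x - x⁻¹)))
      = (q^2*x - (q^2)⁻¹*x⁻¹)/(x-x⁻¹) := by
  have stepB : q * (1 + (1 - (q^2)⁻¹)/(q^2*x^2-1)) * (q*x - q⁻¹*x⁻¹)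
      = q^2*x - (q^2)⁻¹*x⁻¹ := by
    field_simp
    ring
  calc (Q * q) * (1 + (1 - (q^2)⁻¹)/(q^2*x^2-1)) * (Q⁻¹ * ((q*x - q⁻¹*x⁻¹)/(x - x⁻¹)))
      = (Q * Q⁻¹) * (q * (1 + (1 - (q^2)⁻¹)/(q^2*x^2-1)) * ((q*x - q⁻¹*x⁻¹)/(x - x⁻¹))) := by
        ring
    _ = (q^2*x - (q^2)⁻¹*x⁻¹)/(x-x⁻¹) := by
        rw [mul_inv_cancel₀ hQ, one_mul, ← mul_div_assoc, stepB]

/-- Type `C_n` case of the Lemma rewriting the Harish–Chandra image of the order-`ℓ`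
quantum Casimir element. -/
theorem typeC_casimir_HC_image_rewrite (n : ℕ) (hn : 3 ≤ n) (ℓ : ℕ) (hℓ : 1 ≤ ℓ) :
    ∑ a ∈ In n,
        qF ^ (2 * (n : ℤ)) * (1 + (1 - qF ^ (-2 : ℤ)) / (qF ^ 2 * (LF a) ^ 2 - 1)) *
          ((qF ^ (-(2 * (n : ℤ))) * LF a - 1) / (qF - qF⁻¹)) ^ ℓ *
          ∏ b ∈ (In n).erase a, (qF * LF a - qF⁻¹ * LF b) / (qF * LF a - qF * LF b)
    = ∑ a ∈ In n,
        ((qF ^ 2 * LF a - qF ^ (-2 : ℤ) * (LF a)⁻¹) / (LF a - (LF a)⁻¹)) *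
          ((qF ^ (-(2 * (n : ℤ))) * LF a - 1) / (qF - qF⁻¹)) ^ ℓ * Pna n a := by
  apply Finset.sum_congr rfl
  intro a ha
  have ha0 : a ≠ 0 := (mem_In.1 ha).1
  have hq : qF ≠ 0 := qF_ne
  have hx0 : LF a ≠ 0 := LF_ne a ha0
  have hLneg : LF (-a) = (LF a)⁻¹ := by
    rcases lt_or_gt_of_ne ha0 with h'|h'
    · have := LF_negg (-a) (by omega)
      rw [neg_neg] at this
      rw [this, inv_inv]
    · exact LF_negg a h'
  have hmemS : -a ∈ (In n).erase a := Finset.mem_erase.2 ⟨by omega, neg_mem_In ha⟩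
  have hcard : ((In n).erase a).card = 2*n - 1 := by
    rw [Finset.card_erase_of_mem ha, card_In n]
  have hprod : ∏ b ∈ (In n).erase a, (qF * LF a - qF⁻¹ * LF b) / (qF * LF a - qF * LF b)
      = (qF⁻¹)^(2*n-1) * ((qF * LF a - qF⁻¹ * (LF a)⁻¹)/(LF a - (LF a)⁻¹) * Pna n a) := by
    have step1 : ∀ b ∈ (In n).erase a,
        (qF * LF a - qF⁻¹ * LF b) / (qF * LF a - qF * LF b)
        = qF⁻¹ * ((qF * LF a - qF⁻¹ * LF b) / (LF a - LF b)) := by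
      intro b _
      rw [show qF * LF a - qF * LF b = qF * (LF a - LF b) by ring,
        div_mul_eq_div_div_swap, div_eq_mul_inv, mul_comm]
    rw [Finset.prod_congr rfl step1, Finset.prod_mul_distrib, Finset.prod_const, hcard,
      ← Finset.mul_prod_erase _ _ hmemS, hLneg, Pna]
  rw [hprod]
  have hd1 : qF^2 * (LF a)^2 - 1 ≠ 0 := sub_ne_zero.2 (qsq_LF_sq_ne a ha0)
  have hd2 : LF a - (LF a)⁻¹ ≠ 0 := by
    rw [sub_ne_zero]
    intro hc
    have h1 := mul_inv_cancel₀ hx0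
    rw [← hc] at h1
    exact LF_sq_ne a ha0 (by rw [sq]; exact h1)
  have hz1 : qF ^ (2*(n:ℤ)) = qF^(2*n-1) * qF := by
    have h1 : qF ^ (2*(n:ℤ)) = qF^(2*n) := by rw [← zpow_natCast]; norm_cast
    rw [h1, ← pow_succ]
    congr 1; omega
  have hz2 : qF ^ (-2:ℤ) = (qF^2)⁻¹ := by rw [zpow_neg]; norm_cast
  have hQ : qF^(2*n-1) ≠ 0 := pow_ne_zero _ hq
  rw [hz1, hz2, inv_pow]
  have key := key_general qF (LF a) (qF^(2*n-1)) hq hx0 hQ hd1 hd2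
  linear_combination (((qF ^ (-(2 * (n:ℤ))) * LF a - 1) / (qF - qF⁻¹)) ^ ℓ * Pna n a) * key
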